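/- Let p1,…,p5 ∈ ℝ⁴ be affinely independent, let v = |det T| / 24 > 0 be the hypervolume of the pentatope with these vertices, and let a = (96·v/√5)^{1/4} (so the regular pentatope with edge length a has hypervolume v). Then the quality heuristic η⁽¹⁾ := 4 · (det A(R,T))^{1/4} / trace(A(R,T)) — which, since A(R,T) is symmetric positive definite, equals the ratio of the geometric mean to the arithmetic mean of the four eigenvalues of A(R,T) — satisfies η⁽¹⁾ = 5^{3/4} · √(384·v) / Σ_{1 ≤ i < j ≤ 5} d_{ij}, where the denominator is the sum of the ten squared edge lengths of the pentatope. -/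

import Mathlib

open Real Matrix Finset

/-- The edge-vector matrix of the regular pentatope with edge length `a`. -/
noncomputable def regularPentatopeMatrix (a : ℝ) : Matrix (Fin 4) (Fin 4) ℝ :=
  !![a * Real.sqrt 3 / 2, a * Real.sqrt 3 / 2, a * Real.sqrt 3 / 3, a * Real.sqrt 3 / 3;
     -a / 2,              a / 2,               0,                   0;
     0,                   0,                   a * Real.sqrt 6 / 3, a * Real.sqrt 6 / 12;
     0,                   0,                   0,                   a * Real.sqrt 10 / 4]

/-- The edge-vector matrix of the pentatope with vertices `p 0, …, p 4`. -/
noncomputable def edgeMatrix (p : Fin 5 → EuclideanSpace ℝ (Fin 4)) :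
    Matrix (Fin 4) (Fin 4) ℝ :=
  Matrix.of fun (k : Fin 4) (i : Fin 4) => (p i.succ - p 0) k

/-- `A(R,T) = (R⁻¹)ᵀ · TᵀT · R⁻¹`. -/
noncomputable def shapeMatrix (a : ℝ) (p : Fin 5 → EuclideanSpace ℝ (Fin 4)) :
    Matrix (Fin 4) (Fin 4) ℝ :=
  ((regularPentatopeMatrix a)⁻¹)ᵀ * ((edgeMatrix p)ᵀ * edgeMatrix p) *
    (regularPentatopeMatrix a)⁻¹

/-!
Write `G = TᵀT`, the Gram matrix of the edge vectors `uᵢ = p (i+1) - p 0`. Then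
`det A = (det T / det R)² = 1`, because `a` is chosen so that `R` has the hypervolume of `T`, and
`trace A = trace (G (RᵀR)⁻¹)`. For the regular pentatope `RᵀR = (a²/2) (1 + J)` with `J` the
all-ones matrix, so `(RᵀR)⁻¹ = (2/a²) (1 - J/5)` and `trace A = (2/a²) (∑ ‖uᵢ‖² - ‖∑ uᵢ‖²/5)`.
By Lagrange's identity the ten squared edge lengths add up to `5 ∑ ‖uᵢ‖² - ‖∑ uᵢ‖²`, hence
`η⁽¹⁾ = 10 a² / ∑ d_ij`, and `10 a² = 5^{3/4} √(384 v)`.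
-/

section AllOnes

variable {n K : Type*} [Fintype n]

variable (n K) in
def allOnes [One K] : Matrix n n K := of fun _ _ => 1

theorem allOnes_mul_allOnes [Semiring K] :
    allOnes n K * allOnes n K = (Fintype.card n : K) • allOnes n K := by
  ext i j
  simp [allOnes, mul_apply]

theorem trace_mul_allOnes [Semiring K] (M : Matrix n n K) :
    (M * allOnes n K).trace = ∑ i, ∑ j, M i j := by
  simp [allOnes, trace, mul_apply]

theorem one_add_allOnes_mul_one_sub [DecidableEq n] [Field K]
    (h : (Fintype.card n + 1 : K) ≠ 0) :
    (1 + allOnes n K) * (1 - (Fintype.card n + 1 : K)⁻¹ • allOnes n K) = 1 := by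
  have hc : (Fintype.card n + 1 : K)⁻¹ * Fintype.card n = 1 - (Fintype.card n + 1 : K)⁻¹ := by
    field_simp
    ring
  rw [add_mul, one_mul, mul_sub, mul_one, Matrix.mul_smul, allOnes_mul_allOnes, smul_smul, hc,
    sub_smul, one_smul]
  abel

end AllOnes

section Gram

variable {ι E : Type*} [Fintype ι] [NormedAddCommGroup E] [InnerProductSpace ℝ E]

theorem trace_gram (v : ι → E) : (gram ℝ v).trace = ∑ i, ‖v i‖ ^ 2 := by
  simp [trace, gram_apply]

theorem sum_gram_apply (v : ι → E) : ∑ i, ∑ j, gram ℝ v i j = ‖∑ i, v i‖ ^ 2 := by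
  rw [← real_inner_self_eq_norm_sq, sum_inner]
  simp [gram_apply, inner_sum]

theorem two_nsmul_sum_filter_lt {M : Type*} [LinearOrder ι] [AddCommMonoid M] (f : ι → ι → M)
    (hf : ∀ i j, f i j = f j i) (hdiag : ∀ i, f i i = 0) :
    2 • ∑ ij ∈ univ.filter (fun ij : ι × ι => ij.1 < ij.2), f ij.1 ij.2 = ∑ i, ∑ j, f i j := by
  have hsplit : ∀ i j, f i j = (if i < j then f i j else 0) + if j < i then f j i else 0 := by
    intro i j
    rcases lt_trichotomy i j with h | rfl | h
    · simp [h, h.not_gt]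
    · simp [hdiag]
    · simp [h, h.not_gt, hf]
  rw [two_nsmul, sum_filter, Fintype.sum_prod_type]
  conv_rhs => enter [2, i, 2, j]; rw [hsplit i j]
  simp only [sum_add_distrib]
  rw [sum_comm (f := fun i j => if j < i then f j i else 0)]

theorem sum_filter_lt_norm_sub_sq [LinearOrder ι] (v : ι → E) :
    ∑ ij ∈ univ.filter (fun ij : ι × ι => ij.1 < ij.2), ‖v ij.2 - v ij.1‖ ^ 2 =
      Fintype.card ι * ∑ i, ‖v i‖ ^ 2 - ‖∑ i, v i‖ ^ 2 := by
  have hpairs := two_nsmul_sum_filter_lt (fun i j => ‖v j - v i‖ ^ 2)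
    (fun i j => by rw [norm_sub_rev]) (by simp)
  have hall : ∑ i, ∑ j, ‖v j - v i‖ ^ 2 =
      2 * (Fintype.card ι * ∑ i, ‖v i‖ ^ 2 - ‖∑ i, v i‖ ^ 2) := by
    simp only [norm_sub_sq_real, sum_add_distrib, sum_sub_distrib, ← mul_sum, ← sum_inner,
      ← inner_sum, sum_const, card_univ, nsmul_eq_mul, real_inner_self_eq_norm_sq]
    ring
  rw [hall, nsmul_eq_mul] at hpairs
  push_cast at hpairs
  linarith

theorem sum_filter_lt_norm_sub_sq_fin_succ {m : ℕ} (p : Fin (m + 1) → E) :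
    ∑ ij ∈ univ.filter (fun ij : Fin (m + 1) × Fin (m + 1) => ij.1 < ij.2),
        ‖p ij.2 - p ij.1‖ ^ 2 =
      (m + 1) * ∑ i : Fin m, ‖p i.succ - p 0‖ ^ 2 - ‖∑ i : Fin m, (p i.succ - p 0)‖ ^ 2 := by
  have h := sum_filter_lt_norm_sub_sq (fun i => p i - p 0)
  simp only [sub_sub_sub_cancel_right, Fin.sum_univ_succ, sub_self, norm_zero,
    zero_pow two_ne_zero, zero_add, Fintype.card_fin] at h
  push_cast at h
  exact h

end Gram

section Conjugation

variable {n K : Type*} [Fintype n] [DecidableEq n]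

theorem det_transpose_inv_mul_mul_inv [Field K] (R M : Matrix n n K) :
    ((R⁻¹)ᵀ * M * R⁻¹).det = M.det / R.det ^ 2 := by
  rw [det_mul, det_mul, det_transpose, det_nonsing_inv, Ring.inverse_eq_inv']
  ring

theorem trace_transpose_inv_mul_mul_inv [CommRing K] (R M : Matrix n n K) :
    ((R⁻¹)ᵀ * M * R⁻¹).trace = (M * (Rᵀ * R)⁻¹).trace := by
  rw [trace_mul_cycle, trace_mul_comm, Matrix.mul_inv_rev, transpose_nonsing_inv]

end Conjugation

theorem det_regularPentatopeMatrix (a : ℝ) :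
    (regularPentatopeMatrix a).det = a ^ 4 * √5 / 4 := by
  have h6 : √6 = √2 * √3 := by rw [← sqrt_mul (by norm_num)]; norm_num
  have h10 : √10 = √2 * √5 := by rw [← sqrt_mul (by norm_num)]; norm_num
  rw [regularPentatopeMatrix, det_succ_row_zero]
  simp [Fin.sum_univ_succ, det_fin_three, Fin.succAbove, h6, h10]
  ring_nf
  simp only [sq_sqrt (show (0:ℝ) ≤ 2 by norm_num), sq_sqrt (show (0:ℝ) ≤ 3 by norm_num)]
  ring

theorem regularPentatopeMatrix_transpose_mul_self (a : ℝ) :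
    (regularPentatopeMatrix a)ᵀ * regularPentatopeMatrix a =
      (a ^ 2 / 2) • (1 + allOnes (Fin 4) ℝ) := by
  have h3 : √3 ^ 2 = 3 := sq_sqrt (by norm_num)
  have h6 : √6 ^ 2 = 6 := sq_sqrt (by norm_num)
  have h10 : √10 ^ 2 = 10 := sq_sqrt (by norm_num)
  ext i j
  fin_cases i <;> fin_cases j <;>
    simp [regularPentatopeMatrix, allOnes, mul_apply, Fin.sum_univ_four, one_apply] <;>
    ring_nf <;> simp only [h3, h6, h10] <;> ring

theorem regularPentatopeMatrix_transpose_mul_self_inv {a : ℝ} (ha : a ≠ 0) :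
    ((regularPentatopeMatrix a)ᵀ * regularPentatopeMatrix a)⁻¹ =
      (2 / a ^ 2) • (1 - (5 : ℝ)⁻¹ • allOnes (Fin 4) ℝ) := by
  have h5 : (Fintype.card (Fin 4) + 1 : ℝ) = 5 := by norm_num
  have hscalar : a ^ 2 / 2 * (2 / a ^ 2) = 1 := by field_simp
  refine inv_eq_right_inv ?_
  rw [regularPentatopeMatrix_transpose_mul_self, smul_mul_smul_comm, hscalar, one_smul, ← h5,
    one_add_allOnes_mul_one_sub (by rw [h5]; norm_num)]

theorem edgeMatrix_transpose_mul_self (p : Fin 5 → EuclideanSpace ℝ (Fin 4)) :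
    (edgeMatrix p)ᵀ * edgeMatrix p = gram ℝ (fun i => p i.succ - p 0) := by
  ext i j
  simp [edgeMatrix, mul_apply, gram_apply, PiLp.inner_apply, mul_comm]

theorem trace_shapeMatrix (p : Fin 5 → EuclideanSpace ℝ (Fin 4)) {a : ℝ} (ha : a ≠ 0) :
    (shapeMatrix a p).trace = 2 / (5 * a ^ 2) *
      ∑ ij ∈ univ.filter (fun ij : Fin 5 × Fin 5 => ij.1 < ij.2), ‖p ij.2 - p ij.1‖ ^ 2 := by
  rw [shapeMatrix, trace_transpose_inv_mul_mul_inv,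
    regularPentatopeMatrix_transpose_mul_self_inv ha, edgeMatrix_transpose_mul_self,
    sum_filter_lt_norm_sub_sq_fin_succ, Matrix.mul_smul, trace_smul, Matrix.mul_sub,
    Matrix.mul_one, Matrix.mul_smul, trace_sub, trace_smul, trace_gram, trace_mul_allOnes,
    sum_gram_apply, smul_eq_mul, smul_eq_mul]
  push_cast
  field_simp
  ring

theorem ten_mul_sq_eq_of_pow_four {v a : ℝ} (hv : 0 ≤ v) (ha4 : a ^ 4 = 96 * v / √5) :
    10 * a ^ 2 = (5 : ℝ) ^ ((3 : ℝ) / 4) * √(384 * v) := by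
  have h5 : ((5 : ℝ) ^ ((3 : ℝ) / 4)) ^ 2 = 5 * √5 := by
    rw [← rpow_natCast, ← rpow_mul (by norm_num), sqrt_eq_rpow, ← rpow_one_add' (by norm_num)]
    all_goals norm_num
  refine (pow_left_inj₀ (by positivity) (by positivity) two_ne_zero).1 ?_
  rw [mul_pow, mul_pow, h5, sq_sqrt (by positivity), ← pow_mul, ha4]
  field_simp
  rw [sq_sqrt (by norm_num)]
  ring

theorem quality_heuristic_one_general (p : Fin 5 → EuclideanSpace ℝ (Fin 4))
    (v a : ℝ)
    (hv : v = |(edgeMatrix p).det| / 24) (hvpos : 0 < v)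
    (ha : a = (96 * v / Real.sqrt 5) ^ ((1 : ℝ) / 4)) :
    4 * (shapeMatrix a p).det ^ ((1 : ℝ) / 4) / (shapeMatrix a p).trace =
      (5 : ℝ) ^ ((3 : ℝ) / 4) * Real.sqrt (384 * v) /
        ∑ ij ∈ Finset.univ.filter (fun ij : Fin 5 × Fin 5 => ij.1 < ij.2),
          ‖p ij.2 - p ij.1‖ ^ 2 := by
  have hbase : 0 < 96 * v / √5 := by positivity
  have ha_pos : 0 < a := ha ▸ rpow_pos_of_pos hbase _
  have ha4 : a ^ 4 = 96 * v / √5 := by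
    rw [ha, ← rpow_natCast, ← rpow_mul hbase.le]
    norm_num
  have hdetT : (edgeMatrix p).det ≠ 0 := by
    intro h
    rw [h, abs_zero, zero_div] at hv
    exact hvpos.ne' hv
  have hdetR : (regularPentatopeMatrix a).det = |(edgeMatrix p).det| := by
    rw [det_regularPentatopeMatrix, ha4, hv]
    field_simp
    ring
  have hdetA : (shapeMatrix a p).det = 1 := by
    rw [shapeMatrix, det_transpose_inv_mul_mul_inv, det_mul, det_transpose, hdetR, sq_abs, ← sq,
      div_self (pow_ne_zero 2 hdetT)]
  rw [hdetA, one_rpow, trace_shapeMatrix p ha_pos.ne', ← ten_mul_sq_eq_of_pow_four hvpos.le ha4]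
  field_simp
  norm_num

/-- For affinely independent vertices `p`, with hypervolume `v = |det T| / 24 > 0` and
`a = (96·v/√5)^{1/4}`, the quality heuristic
`η⁽¹⁾ = 4 · (det A(R,T))^{1/4} / trace(A(R,T))` satisfies
`η⁽¹⁾ = 5^{3/4} · √(384·v) / Σ_{1 ≤ i < j ≤ 5} d_{ij}`. -/
theorem quality_heuristic_one (p : Fin 5 → EuclideanSpace ℝ (Fin 4))
    (hp : AffineIndependent ℝ p) (v a : ℝ)
    (hv : v = |(edgeMatrix p).det| / 24) (hvpos : 0 < v)
    (ha : a = (96 * v / Real.sqrt 5) ^ ((1 : ℝ) / 4)) :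
    4 * (shapeMatrix a p).det ^ ((1 : ℝ) / 4) / (shapeMatrix a p).trace =
      (5 : ℝ) ^ ((3 : ℝ) / 4) * Real.sqrt (384 * v) /
        ∑ ij ∈ Finset.univ.filter (fun ij : Fin 5 × Fin 5 => ij.1 < ij.2),
          ‖p ij.2 - p ij.1‖ ^ 2 :=
  quality_heuristic_one_general p v a hv hvpos ha
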